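/- Let S₁, …, S_m be subspaces of Hermitian operators each containing the identity, let n = dim(S₁ ⊗ ⋯ ⊗ S_m), and let Φ be a linear super-operator on S₁ ⊗ ⋯ ⊗ S_m which maps every (S₁;…;S_m)-separable operator to a positive semidefinite operator. Then for every X ∈ S₁ ⊗ ⋯ ⊗ S_m, ‖Φ(X)‖ ≤ 2^{m−1} √n (n+1) ‖X‖_F ‖Φ(I)‖. -/

import Mathlib

/-!
Write each `A ∈ S i` as `P - Q` with `P = (‖A‖ • 1 + A) / 2` and `Q = (‖A‖ • 1 - A) / 2`: these
are positive, bounded by `‖A‖ • 1`, and lie in `S i` because `1 ∈ S i`. For positive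
`R i ≤ c i • 1` in `S i`, expanding `⊗ (R i + (c i • 1 - R i))` shows that `(∏ c i) • 1 - ⊗ R i`
is separable, so `0 ≤ Φ (⊗ R i) ≤ (∏ c i) • Φ 1` and `‖Φ (⊗ R i)‖ ≤ (∏ c i) ‖Φ 1‖`. Expanding
`⊗ (P i - Q i)` into `2 ^ m` such terms gives `‖Φ (⊗ A i)‖ ≤ 2 ^ m (∏ ‖A i‖) ‖Φ 1‖`.

Frobenius-orthonormal bases of the `S i` consist of Hermitian matrices of operator norm at most
`1`. For Hermitian factors `Re tr (Aᴴ B)` is multiplicative on tensor products, so their tensor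
products form an orthonormal basis of `S₁ ⊗ ⋯ ⊗ S_m` with `n` elements, and the coefficients `c`
of `X` in it satisfy `∑ |c α| ≤ √n ‖X‖_F`. Hence `‖Φ X‖ ≤ 2 ^ m √n ‖X‖_F ‖Φ 1‖`, and
`2 ≤ n + 1` unless `n = 0`.
-/

open Matrix
open scoped ComplexOrder

variable {m : ℕ} {d : Fin m → ℕ}

/-- The elementary tensor product of matrices `P i`, as a matrix on the product space. -/
def prodMat (P : ∀ i, Matrix (Fin (d i)) (Fin (d i)) ℂ) :
    Matrix (∀ i, Fin (d i)) (∀ i, Fin (d i)) ℂ :=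
  Matrix.of fun p q => ∏ i, P i (p i) (q i)

/-- The subspace `S₁ ⊗ ⋯ ⊗ S_m`, i.e. the real span of elementary tensor products of
elements of the subspaces `S i`. -/
noncomputable def tensorSpan (S : ∀ i, Submodule ℝ (Matrix (Fin (d i)) (Fin (d i)) ℂ)) :
    Submodule ℝ (Matrix (∀ i, Fin (d i)) (∀ i, Fin (d i)) ℂ) :=
  Submodule.span ℝ {X | ∃ P : ∀ i, Matrix (Fin (d i)) (Fin (d i)) ℂ,
    (∀ i, P i ∈ S i) ∧ X = prodMat P}

/-- `(S₁;…;S_m)`-separability: a finite sum of elementary tensor products of positive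
semidefinite elements of the subspaces `S i`. -/
def IsSep (S : ∀ i, Submodule ℝ (Matrix (Fin (d i)) (Fin (d i)) ℂ))
    (X : Matrix (∀ i, Fin (d i)) (∀ i, Fin (d i)) ℂ) : Prop :=
  ∃ (k : ℕ) (P : Fin k → ∀ i, Matrix (Fin (d i)) (Fin (d i)) ℂ),
    (∀ j i, P j i ∈ S i ∧ (P j i).PosSemidef) ∧ X = ∑ j, prodMat (P j)

/-- The operator (spectral) norm of a complex matrix. -/
noncomputable def opNorm {n : Type*} [Fintype n] [DecidableEq n] (A : Matrix n n ℂ) : ℝ :=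
  ‖Matrix.toEuclideanCLM (𝕜 := ℂ) A‖

/-- The Frobenius norm of a complex matrix. -/
noncomputable def frobNorm {n : Type*} [Fintype n] (A : Matrix n n ℂ) : ℝ :=
  Real.sqrt (∑ p, ∑ q, ‖A p q‖ ^ 2)

open scoped Matrix.Norms.L2Operator MatrixOrder InnerProductSpace

section Frobenius
variable {n : Type*}

noncomputable def frobEmbed : Matrix n n ℂ →ₗ[ℝ] EuclideanSpace ℂ (n × n) where
  toFun A := WithLp.toLp 2 A.vec
  map_add' A B := by rw [vec_add, WithLp.toLp_add]
  map_smul' c A := by rw [vec_smul, WithLp.toLp_smul, RingHom.id_apply]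

lemma frobEmbed_injective : Function.Injective (frobEmbed : Matrix n n ℂ → _) :=
  fun _ _ h => vec_inj.mp (WithLp.toLp_injective 2 h)

variable [Fintype n]

lemma inner_frobEmbed (A B : Matrix n n ℂ) :
    ⟪frobEmbed A, frobEmbed B⟫_ℂ = (Aᴴ * B).trace := by
  rw [EuclideanSpace.inner_eq_star_dotProduct, dotProduct_comm]
  exact star_vec_dotProduct_vec A B

lemma real_inner_frobEmbed (A B : Matrix n n ℂ) :
    ⟪frobEmbed A, frobEmbed B⟫_ℝ = (Aᴴ * B).trace.re := by
  rw [← inner_frobEmbed, PiLp.inner_apply, PiLp.inner_apply, Complex.re_sum]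
  rfl

lemma norm_frobEmbed (A : Matrix n n ℂ) : ‖frobEmbed A‖ = frobNorm A := by
  rw [EuclideanSpace.norm_eq, frobNorm, Fintype.sum_prod_type_right]
  rfl

lemma Matrix.IsHermitian.isSelfAdjoint_trace_mul {A B : Matrix n n ℂ} (hA : A.IsHermitian)
    (hB : B.IsHermitian) : IsSelfAdjoint (A * B).trace := by
  rw [IsSelfAdjoint, ← trace_conjTranspose, conjTranspose_mul, hA.eq, hB.eq, trace_mul_comm]

variable [DecidableEq n]

lemma opNorm_eq_norm (A : Matrix n n ℂ) : opNorm A = ‖A‖ := rfl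

lemma norm_le_frobNorm (A : Matrix n n ℂ) : ‖A‖ ≤ frobNorm A := by
  refine (toEuclideanCLM (𝕜 := ℂ) A).opNorm_le_bound (Real.sqrt_nonneg _) fun x => ?_
  rw [frobNorm, ← sq_le_sq₀ (norm_nonneg _) (by positivity), mul_pow,
    Real.sq_sqrt (by positivity), EuclideanSpace.norm_sq_eq, EuclideanSpace.norm_sq_eq,
    Finset.sum_mul]
  gcongr with p
  rw [ofLp_toEuclideanCLM, mulVec, dotProduct]
  calc ‖∑ q, A p q * x q‖ ^ 2 ≤ (∑ q, ‖A p q‖ * ‖x q‖) ^ 2 := by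
        gcongr
        exact (norm_sum_le _ _).trans_eq (by simp_rw [norm_mul])
    _ ≤ _ := Finset.sum_mul_sq_le_sq_mul_sq _ _ _

end Frobenius

section ProdMat

@[simp] lemma prodMat_apply (P : ∀ i, Matrix (Fin (d i)) (Fin (d i)) ℂ) (p q : ∀ i, Fin (d i)) :
    prodMat P p q = ∏ i, P i (p i) (q i) := rfl

lemma prodMat_one : prodMat (fun i => (1 : Matrix (Fin (d i)) (Fin (d i)) ℂ)) = 1 := by
  ext p q
  simp only [prodMat_apply, one_apply, Finset.prod_boole, Finset.mem_univ, forall_const, funext_iff]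

lemma prodMat_smul (c : Fin m → ℝ) (P : ∀ i, Matrix (Fin (d i)) (Fin (d i)) ℂ) :
    prodMat (fun i => c i • P i) = (∏ i, c i) • prodMat P := by
  ext p q
  simp only [prodMat_apply, Matrix.smul_apply, Complex.real_smul, Finset.prod_mul_distrib,
    Complex.ofReal_prod]

lemma prodMat_sum {κ : Fin m → Type*} [∀ i, Fintype (κ i)]
    (f : ∀ i, κ i → Matrix (Fin (d i)) (Fin (d i)) ℂ) :
    prodMat (fun i => ∑ b, f i b) = ∑ ε : ∀ i, κ i, prodMat (fun i => f i (ε i)) := by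
  ext p q
  simp only [prodMat_apply, Matrix.sum_apply]
  exact Fintype.prod_sum fun i b => f i b (p i) (q i)

lemma prodMat_add (P Q : ∀ i, Matrix (Fin (d i)) (Fin (d i)) ℂ) :
    prodMat (fun i => P i + Q i) =
      ∑ ε : Fin m → Bool, prodMat (fun i => bif ε i then Q i else P i) := by
  simpa only [Fintype.sum_bool, cond_true, cond_false, add_comm] using
    prodMat_sum fun i b => bif b then Q i else P i

lemma prodMat_sub (P Q : ∀ i, Matrix (Fin (d i)) (Fin (d i)) ℂ) :
    prodMat (fun i => P i - Q i) = ∑ ε : Fin m → Bool,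
      (∏ i, bif ε i then (-1 : ℝ) else 1) • prodMat (fun i => bif ε i then Q i else P i) := by
  simp_rw [sub_eq_add_neg, prodMat_add, ← prodMat_smul]
  refine Finset.sum_congr rfl fun ε _ => congrArg prodMat (funext fun i => ?_)
  cases ε i <;> simp

lemma conjTranspose_prodMat (P : ∀ i, Matrix (Fin (d i)) (Fin (d i)) ℂ) :
    (prodMat P)ᴴ = prodMat fun i => (P i)ᴴ := by
  ext p q
  simp [conjTranspose_apply]

lemma prodMat_mul (P Q : ∀ i, Matrix (Fin (d i)) (Fin (d i)) ℂ) :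
    prodMat P * prodMat Q = prodMat fun i => P i * Q i := by
  ext p q
  simp only [mul_apply, prodMat_apply, ← Finset.prod_mul_distrib]
  exact (Fintype.prod_sum fun i b => P i (p i) b * Q i b (q i)).symm

lemma trace_prodMat (P : ∀ i, Matrix (Fin (d i)) (Fin (d i)) ℂ) :
    (prodMat P).trace = ∏ i, (P i).trace := by
  simp only [trace, diag, prodMat_apply]
  exact (Fintype.prod_sum fun i b => P i b b).symm

end ProdMat

section Orthonormal
variable {n : Type*} [Fintype n]

lemma exists_orthonormal_frobEmbed (S : Submodule ℝ (Matrix n n ℂ)) :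
    ∃ (k : ℕ) (e : Fin k → Matrix n n ℂ), (∀ a, e a ∈ S) ∧ Orthonormal ℝ (frobEmbed ∘ e) ∧
      S ≤ Submodule.span ℝ (Set.range e) := by
  set b := stdOrthonormalBasis ℝ (S.map frobEmbed)
  choose e he hfe using fun a => Submodule.mem_map.mp (b a).2
  have hfe' : frobEmbed ∘ e = Subtype.val ∘ b := funext hfe
  refine ⟨_, e, he, hfe' ▸ b.orthonormal.comp_linearIsometry (Submodule.subtypeₗᵢ _),
    fun M hM => ?_⟩
  have hsum := congrArg Subtype.val (b.sum_repr ⟨frobEmbed M, Submodule.mem_map_of_mem hM⟩)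
  rw [Submodule.coe_sum] at hsum
  have hM : M = ∑ a, b.repr ⟨frobEmbed M, Submodule.mem_map_of_mem hM⟩ a • e a := by
    refine frobEmbed_injective ?_
    simp_rw [map_sum, map_smul, hfe]
    exact hsum.symm
  rw [hM]
  exact Submodule.sum_mem _ fun a _ => Submodule.smul_mem _ _ (Submodule.subset_span ⟨a, rfl⟩)

lemma Orthonormal.sum_abs_le_sqrt_card_mul_norm {ι E : Type*} [Fintype ι] [NormedAddCommGroup E]
    [InnerProductSpace ℝ E] {v : ι → E} (hv : Orthonormal ℝ v) (c : ι → ℝ) :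
    ∑ i, |c i| ≤ √(Fintype.card ι) * ‖∑ i, c i • v i‖ := by
  have hnorm : ‖∑ i, c i • v i‖ ^ 2 = ∑ i, |c i| ^ 2 := by
    rw [← real_inner_self_eq_norm_sq, hv.inner_sum]
    simp [sq]
  refine le_of_sq_le_sq ?_ (by positivity)
  rw [mul_pow, Real.sq_sqrt (Nat.cast_nonneg _), hnorm]
  exact sq_sum_le_card_mul_sum_sq

lemma orthonormal_frobEmbed_prodMat {κ : Fin m → Type*} [∀ i, Fintype (κ i)]
    {e : ∀ i, κ i → Matrix (Fin (d i)) (Fin (d i)) ℂ} (he : ∀ i a, (e i a).IsHermitian)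
    (hon : ∀ i, Orthonormal ℝ (frobEmbed ∘ e i)) :
    Orthonormal ℝ fun α : ∀ i, κ i => frobEmbed (prodMat fun i => e i (α i)) := by
  classical
  rw [orthonormal_iff_ite]
  intro α β
  have hfactor : ∀ i,
      ((e i (α i))ᴴ * e i (β i)).trace = ((if α i = β i then 1 else 0 : ℝ) : ℂ) := fun i => by
    rw [← orthonormal_iff_ite.mp (hon i), Function.comp_apply, Function.comp_apply,
      real_inner_frobEmbed, (he i (α i)).eq]
    exact (Complex.conj_eq_iff_re.mp ((he i _).isSelfAdjoint_trace_mul (he i _))).symm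
  simp_rw [real_inner_frobEmbed, conjTranspose_prodMat, prodMat_mul, trace_prodMat, hfactor,
    ← Complex.ofReal_prod, Complex.ofReal_re]
  simp only [Finset.prod_boole, Finset.mem_univ, forall_const]
  exact if_congr funext_iff.symm rfl rfl

end Orthonormal

lemma tensorSpan_eq_span_range_prodMat {S : ∀ i, Submodule ℝ (Matrix (Fin (d i)) (Fin (d i)) ℂ)}
    {κ : Fin m → Type*} [∀ i, Fintype (κ i)] {e : ∀ i, κ i → Matrix (Fin (d i)) (Fin (d i)) ℂ}
    (he : ∀ i a, e i a ∈ S i) (hspan : ∀ i, S i ≤ Submodule.span ℝ (Set.range (e i))) :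
    tensorSpan S = Submodule.span ℝ (Set.range fun α : ∀ i, κ i => prodMat fun i => e i (α i)) := by
  refine le_antisymm (Submodule.span_le.mpr ?_) (Submodule.span_le.mpr ?_)
  · rintro _ ⟨P, hP, rfl⟩
    choose c hc using fun i => (Submodule.mem_span_range_iff_exists_fun ℝ).mp (hspan i (hP i))
    rw [show P = fun i => ∑ a, c i a • e i a from funext fun i => (hc i).symm, prodMat_sum]
    refine Submodule.sum_mem _ fun α _ => ?_
    rw [prodMat_smul]
    exact Submodule.smul_mem _ _ (Submodule.subset_span ⟨α, rfl⟩)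
  · rintro _ ⟨α, rfl⟩
    exact Submodule.subset_span ⟨fun i => e i (α i), fun i => he i (α i), rfl⟩

lemma norm_map_sum_smul_le {ι V W : Type*} [Fintype ι] [AddCommGroup V] [Module ℝ V]
    [SeminormedAddCommGroup W] [Module ℝ W] [NormSMulClass ℝ W] (Φ : V →ₗ[ℝ] W) {M : ι → V}
    {K : ℝ} (hK : ∀ i, ‖Φ (M i)‖ ≤ K) (c : ι → ℝ) :
    ‖Φ (∑ i, c i • M i)‖ ≤ (∑ i, |c i|) * K := by
  rw [map_sum, Finset.sum_mul]
  refine (norm_sum_le _ _).trans (Finset.sum_le_sum fun i _ => ?_)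
  rw [map_smul, norm_smul, Real.norm_eq_abs]
  exact mul_le_mul_of_nonneg_left (hK i) (abs_nonneg _)

lemma norm_map_le_of_orthonormal {n ι W : Type*} [Fintype n] [Fintype ι] [SeminormedAddCommGroup W]
    [Module ℝ W] [NormSMulClass ℝ W] (Φ : Matrix n n ℂ →ₗ[ℝ] W) {E : ι → Matrix n n ℂ}
    (hE : Orthonormal ℝ (frobEmbed ∘ E)) {K : ℝ} (hK₀ : 0 ≤ K) (hK : ∀ α, ‖Φ (E α)‖ ≤ K)
    (c : ι → ℝ) :
    ‖Φ (∑ α, c α • E α)‖ ≤ √(Fintype.card ι) * frobNorm (∑ α, c α • E α) * K := by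
  refine (norm_map_sum_smul_le Φ hK c).trans (mul_le_mul_of_nonneg_right ?_ hK₀)
  simpa only [← norm_frobEmbed, map_sum, map_smul, Function.comp_apply] using
    hE.sum_abs_le_sqrt_card_mul_norm c

lemma half_smul_add_mem_Icc {M : Type*} [AddCommGroup M] [PartialOrder M] [IsOrderedAddMonoid M]
    [Module ℝ M] [PosSMulMono ℝ M] {a u : M} (h₁ : -u ≤ a) (h₂ : a ≤ u) :
    (2⁻¹ : ℝ) • (u + a) ∈ Set.Icc 0 u := by
  refine ⟨smul_nonneg (by norm_num) (neg_le_iff_add_nonneg'.mp h₁), ?_⟩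
  rw [← sub_nonneg, show u - (2⁻¹ : ℝ) • (u + a) = (2⁻¹ : ℝ) • (u - a) by module]
  exact smul_nonneg (by norm_num) (sub_nonneg.mpr h₂)

section Separable
variable {S : ∀ i, Submodule ℝ (Matrix (Fin (d i)) (Fin (d i)) ℂ)}

lemma isSep_prodMat {P : ∀ i, Matrix (Fin (d i)) (Fin (d i)) ℂ} (hS : ∀ i, P i ∈ S i)
    (hP : ∀ i, 0 ≤ P i) : IsSep S (prodMat P) :=
  ⟨1, fun _ => P, fun _ i => ⟨hS i, nonneg_iff_posSemidef.mp (hP i)⟩, by simp⟩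

lemma isSep_zero : IsSep S 0 := ⟨0, Fin.elim0, fun j => j.elim0, by simp⟩

lemma IsSep.add {X Y : Matrix (∀ i, Fin (d i)) (∀ i, Fin (d i)) ℂ} (hX : IsSep S X)
    (hY : IsSep S Y) : IsSep S (X + Y) := by
  obtain ⟨k₁, P₁, h₁, rfl⟩ := hX
  obtain ⟨k₂, P₂, h₂, rfl⟩ := hY
  refine ⟨k₁ + k₂, Fin.append P₁ P₂,
    fun j => Fin.addCases (by simpa using h₁) (by simpa using h₂) j, ?_⟩
  simp [Fin.sum_univ_add]

lemma isSep_sum {ι : Type*} (s : Finset ι) {f : ι → Matrix (∀ i, Fin (d i)) (∀ i, Fin (d i)) ℂ}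
    (h : ∀ j ∈ s, IsSep S (f j)) : IsSep S (∑ j ∈ s, f j) :=
  Finset.sum_induction f _ (fun _ _ => IsSep.add) isSep_zero h

lemma isSep_prod_smul_one_sub_prodMat (hone : ∀ i, (1 : Matrix (Fin (d i)) (Fin (d i)) ℂ) ∈ S i)
    {R : ∀ i, Matrix (Fin (d i)) (Fin (d i)) ℂ} {c : Fin m → ℝ} (hS : ∀ i, R i ∈ S i)
    (hR : ∀ i, R i ∈ Set.Icc 0 (c i • 1)) :
    IsSep S ((∏ i, c i) • 1 - prodMat R) := by
  have hexp : (∏ i, c i) • (1 : Matrix (∀ i, Fin (d i)) (∀ i, Fin (d i)) ℂ) =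
      ∑ ε : Fin m → Bool, prodMat fun i => bif ε i then c i • 1 - R i else R i := by
    rw [← prodMat_add, ← prodMat_one, ← prodMat_smul]
    simp only [add_sub_cancel]
  have hfalse : prodMat R = prodMat fun i => bif (fun _ => false) i then c i • 1 - R i else R i :=
    rfl
  rw [hexp, hfalse, ← Finset.sum_erase_eq_sub (Finset.mem_univ _)]
  refine isSep_sum _ fun ε _ => isSep_prodMat (fun i => ?_) (fun i => ?_) <;> cases ε i
  · exact hS i
  · exact sub_mem (Submodule.smul_mem _ _ (hone i)) (hS i)
  · exact (hR i).1
  · exact sub_nonneg.mpr (hR i).2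

end Separable

section PositiveOnSeparable
variable {k : ℕ} {S : ∀ i, Submodule ℝ (Matrix (Fin (d i)) (Fin (d i)) ℂ)}
  {Φ : Matrix (∀ i, Fin (d i)) (∀ i, Fin (d i)) ℂ →ₗ[ℝ] Matrix (Fin k) (Fin k) ℂ}

lemma norm_map_prodMat_le_of_mem_Icc (hone : ∀ i, (1 : Matrix (Fin (d i)) (Fin (d i)) ℂ) ∈ S i)
    (hΦ : ∀ Q, IsSep S Q → (Φ Q).PosSemidef) {R : ∀ i, Matrix (Fin (d i)) (Fin (d i)) ℂ}
    {c : Fin m → ℝ} (hc : ∀ i, 0 ≤ c i) (hS : ∀ i, R i ∈ S i)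
    (hR : ∀ i, R i ∈ Set.Icc 0 (c i • 1)) :
    ‖Φ (prodMat R)‖ ≤ (∏ i, c i) * ‖Φ 1‖ := by
  have h₀ : 0 ≤ Φ (prodMat R) := (hΦ _ (isSep_prodMat hS fun i => (hR i).1)).nonneg
  have h₁ : Φ (prodMat R) ≤ (∏ i, c i) • Φ 1 := by
    rw [← sub_nonneg, ← map_smul, ← map_sub]
    exact (hΦ _ (isSep_prod_smul_one_sub_prodMat hone hS hR)).nonneg
  calc ‖Φ (prodMat R)‖ ≤ ‖(∏ i, c i) • Φ 1‖ := CStarAlgebra.norm_le_norm_of_nonneg_of_le h₀ h₁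
    _ = (∏ i, c i) * ‖Φ 1‖ := by
      rw [norm_smul, Real.norm_of_nonneg (Finset.prod_nonneg fun i _ => hc i)]

lemma norm_map_prodMat_le (hherm : ∀ i, ∀ A ∈ S i, A.IsHermitian)
    (hone : ∀ i, (1 : Matrix (Fin (d i)) (Fin (d i)) ℂ) ∈ S i)
    (hΦ : ∀ Q, IsSep S Q → (Φ Q).PosSemidef) {A : ∀ i, Matrix (Fin (d i)) (Fin (d i)) ℂ}
    (hA : ∀ i, A i ∈ S i) :
    ‖Φ (prodMat A)‖ ≤ 2 ^ m * (∏ i, ‖A i‖) * ‖Φ 1‖ := by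
  set u := fun i => ‖A i‖ • (1 : Matrix (Fin (d i)) (Fin (d i)) ℂ)
  have hu : ∀ i, -u i ≤ A i ∧ A i ≤ u i := fun i => by
    simp only [u, ← Algebra.algebraMap_eq_smul_one]
    exact ⟨(hherm i _ (hA i)).isSelfAdjoint.neg_algebraMap_norm_le_self,
      (hherm i _ (hA i)).isSelfAdjoint.le_algebraMap_norm_self⟩
  -- Not the positive and negative parts of `A`: those need not lie in `S i`.
  set P := fun i => (2⁻¹ : ℝ) • (u i + A i)
  set Q := fun i => (2⁻¹ : ℝ) • (u i + -A i)
  set R := fun (ε : Fin m → Bool) i => bif ε i then Q i else P i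
  have hRS : ∀ ε i, R ε i ∈ S i := fun ε i => by
    have hu_mem : u i ∈ S i := Submodule.smul_mem _ _ (hone i)
    simp only [R]
    cases ε i
    · exact Submodule.smul_mem _ _ (add_mem hu_mem (hA i))
    · exact Submodule.smul_mem _ _ (add_mem hu_mem (neg_mem (hA i)))
  have hR : ∀ ε i, R ε i ∈ Set.Icc 0 (u i) := fun ε i => by
    simp only [R]
    cases ε i
    · exact half_smul_add_mem_Icc (hu i).1 (hu i).2
    · exact half_smul_add_mem_Icc (neg_le_neg (hu i).2) (neg_le.mp (hu i).1)
  have hA_eq : prodMat A = prodMat fun i => P i - Q i :=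
    congrArg prodMat (funext fun i => by simp only [P, Q]; module)
  have hsign : ∀ ε : Fin m → Bool, |∏ i, bif ε i then (-1 : ℝ) else 1| = 1 := fun ε => by
    rw [Finset.abs_prod]
    exact Finset.prod_eq_one fun i _ => by cases ε i <;> simp
  rw [hA_eq, prodMat_sub]
  refine (norm_map_sum_smul_le Φ (fun ε => norm_map_prodMat_le_of_mem_Icc hone hΦ
    (fun i => norm_nonneg (A i)) (hRS ε) (hR ε)) _).trans_eq ?_
  simp [hsign, mul_assoc]

end PositiveOnSeparable

lemma two_pow_mul_sqrt_le (m n : ℕ) : (2 : ℝ) ^ m * √n ≤ 2 ^ (m - 1) * √n * (n + 1) := by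
  rcases Nat.eq_zero_or_pos n with rfl | hn
  · simp
  have h2m : (2 : ℝ) ^ m ≤ 2 ^ (m - 1) * (n + 1) := by
    rcases m with _ | m
    · simp
    · rw [pow_succ, Nat.add_sub_cancel]
      gcongr
      have : (1 : ℝ) ≤ n := by exact_mod_cast hn
      linarith
  calc (2 : ℝ) ^ m * √n ≤ 2 ^ (m - 1) * (n + 1) * √n :=
        mul_le_mul_of_nonneg_right h2m (Real.sqrt_nonneg _)
    _ = 2 ^ (m - 1) * √n * (n + 1) := by ring

/-- Norm bound for super-operators positive on the separable cone:
if `Φ` maps every `(S₁;…;S_m)`-separable operator to a positive semidefinite operator,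
then `‖Φ(X)‖ ≤ 2^(m-1) √n (n+1) ‖X‖_F ‖Φ(I)‖` for every `X ∈ S₁ ⊗ ⋯ ⊗ S_m`. -/
theorem opNorm_apply_le_of_pos_on_sep {m k : ℕ} {d : Fin m → ℕ}
    (S : ∀ i, Submodule ℝ (Matrix (Fin (d i)) (Fin (d i)) ℂ))
    (hherm : ∀ i, ∀ A ∈ S i, A.IsHermitian)
    (hone : ∀ i, (1 : Matrix (Fin (d i)) (Fin (d i)) ℂ) ∈ S i)
    (Φ : Matrix (∀ i, Fin (d i)) (∀ i, Fin (d i)) ℂ →ₗ[ℝ] Matrix (Fin k) (Fin k) ℂ)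
    (hΦ : ∀ Q, IsSep S Q → (Φ Q).PosSemidef)
    (X : Matrix (∀ i, Fin (d i)) (∀ i, Fin (d i)) ℂ) (hX : X ∈ tensorSpan S) :
    opNorm (Φ X) ≤ 2 ^ (m - 1) * Real.sqrt (Module.finrank ℝ (tensorSpan S)) *
      (Module.finrank ℝ (tensorSpan S) + 1) * frobNorm X * opNorm (Φ 1) := by
  choose nb e he hon hspan using fun i => exists_orthonormal_frobEmbed (S i)
  set E := fun α : ∀ i, Fin (nb i) => prodMat fun i => e i (α i)
  have hrange : tensorSpan S = Submodule.span ℝ (Set.range E) :=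
    tensorSpan_eq_span_range_prodMat he hspan
  have hE : Orthonormal ℝ (frobEmbed ∘ E) :=
    orthonormal_frobEmbed_prodMat (fun i a => hherm i _ (he i a)) hon
  have hrank : Module.finrank ℝ (tensorSpan S) = Fintype.card (∀ i, Fin (nb i)) := by
    rw [hrange]
    exact finrank_span_eq_card (hE.linearIndependent.of_comp _)
  have hΦE : ∀ α, ‖Φ (E α)‖ ≤ 2 ^ m * ‖Φ 1‖ := fun α => by
    have hnorm : ∏ i, ‖e i (α i)‖ ≤ 1 := Finset.prod_le_one (fun i _ => norm_nonneg _)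
      fun i _ => (norm_le_frobNorm _).trans_eq (by rw [← norm_frobEmbed]; exact (hon i).1 (α i))
    refine (norm_map_prodMat_le hherm hone hΦ fun i => he i (α i)).trans ?_
    simpa using mul_le_mul_of_nonneg_right (mul_le_mul_of_nonneg_left hnorm (by positivity))
      (norm_nonneg (Φ 1))
  obtain ⟨c, rfl⟩ := (Submodule.mem_span_range_iff_exists_fun ℝ).mp (hrange ▸ hX)
  rw [opNorm_eq_norm, opNorm_eq_norm, hrank]
  calc ‖Φ (∑ α, c α • E α)‖
      ≤ √(Fintype.card (∀ i, Fin (nb i))) * frobNorm (∑ α, c α • E α) * (2 ^ m * ‖Φ 1‖) :=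
        norm_map_le_of_orthonormal Φ hE (by positivity) hΦE c
    _ = 2 ^ m * √(Fintype.card (∀ i, Fin (nb i))) * (frobNorm (∑ α, c α • E α) * ‖Φ 1‖) := by
        ring
    _ ≤ _ := by
        refine (mul_le_mul_of_nonneg_right (two_pow_mul_sqrt_le m _) ?_).trans_eq (by ring)
        exact mul_nonneg (Real.sqrt_nonneg _) (norm_nonneg _)
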